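/- Let (X,d) be an ∞-convex metric space. Then every lower semicontinuous quasi-convex function f : X → (−∞,∞] is lower semicontinuous with respect to the co-convex topology τ_co, i.e. for every net (x_i) converging to x in τ_co with x ∈ dom f one has liminf f(x_i) ≥ f(x). In particular, for each fixed y ∈ X the function x ↦ d(x,y) is τ_co-lower semicontinuous. -/

import Mathlib

open Filter Topology Metric Set MeasureTheory
open scoped ENNReal

section Defs

variable (X : Type) [MetricSpace X]

/-- `m` is a midpoint of `x` and `y`. -/
def IsMidpoint {X : Type} [MetricSpace X] (x y m : X) : Prop :=
  dist x m = dist x y / 2 ∧ dist y m = dist x y / 2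

/-- `(X,d)` admits midpoints. -/
def AdmitsMidpoints : Prop := ∀ x y : X, ∃ m, IsMidpoint x y m

/-- The `p`-mean of two nonnegative reals, `p ∈ [1,∞]`. -/
noncomputable def pMean (p : ℝ≥0∞) (a b : ℝ) : ℝ :=
  if p = ∞ then max a b else ((a ^ p.toReal + b ^ p.toReal) / 2) ^ (1 / p.toReal)

/-- `p`-convexity. -/
def PConvex (p : ℝ≥0∞) : Prop :=
  AdmitsMidpoints X ∧ ∀ x y z m : X, IsMidpoint x y m →
    dist m z ≤ pMean p (dist x z) (dist y z)

/-- strict `p`-convexity. -/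
def StrictlyPConvex (p : ℝ≥0∞) : Prop :=
  AdmitsMidpoints X ∧ ∀ x y z m : X, IsMidpoint x y m →
    (if p = 1 then |dist x z - dist y z| < dist x y else x ≠ y) →
    dist m z < pMean p (dist x z) (dist y z)

/-- uniform `p`-convexity. -/
def UniformlyPConvex (p : ℝ≥0∞) : Prop :=
  AdmitsMidpoints X ∧ ∀ ε : ℝ, 0 < ε → ∃ ρ : ℝ, ρ ∈ Set.Ioo (0:ℝ) 1 ∧
    ∀ x y z m : X, IsMidpoint x y m →
      (if p = 1 then |dist x z - dist y z| + ε * pMean 1 (dist x z) (dist y z) < dist x y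
        else ε * pMean p (dist x z) (dist y z) < dist x y) →
      dist m z ≤ (1 - ρ) * pMean p (dist x z) (dist y z)

/-- Busemann non-positive curvature condition. -/
def Busemann : Prop :=
  AdmitsMidpoints X ∧ ∀ x₀ x₁ y₀ y₁ xm ym : X,
    IsMidpoint x₀ x₁ xm → IsMidpoint y₀ y₁ ym →
      dist xm ym ≤ (dist x₀ y₀ + dist x₁ y₁) / 2

/-- `γ` (restricted to `[0,1]`) is a geodesic from `x` to `y`. -/
def IsGeodesic {X : Type} [MetricSpace X] (γ : ℝ → X) (x y : X) : Prop :=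
  γ 0 = x ∧ γ 1 = y ∧ ∀ s ∈ Set.Icc (0:ℝ) 1, ∀ t ∈ Set.Icc (0:ℝ) 1,
    dist (γ s) (γ t) = |s - t| * dist x y

/-- A subset is (geodesically) convex if it contains all geodesics between its points. -/
def GConvex {X : Type} [MetricSpace X] (C : Set X) : Prop :=
  ∀ x ∈ C, ∀ y ∈ C, ∀ γ : ℝ → X, IsGeodesic γ x y → ∀ t ∈ Set.Icc (0:ℝ) 1, γ t ∈ C

/-- The convex hull: the smallest convex set containing `A`. -/
def gConvexHull {X : Type} [MetricSpace X] (A : Set X) : Set X :=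
  ⋂₀ {C : Set X | GConvex C ∧ A ⊆ C}

/-- `∞`-convexity. -/
def InftyConvex : Prop :=
  AdmitsMidpoints X ∧ ∀ x y z m : X, IsMidpoint x y m →
    dist m z ≤ max (dist x z) (dist y z)

/-- strict `∞`-convexity. -/
def StrictlyInftyConvex : Prop :=
  AdmitsMidpoints X ∧ ∀ x y z m : X, IsMidpoint x y m → x ≠ y →
    dist m z < max (dist x z) (dist y z)

/-- uniform `∞`-convexity. -/
def UniformlyInftyConvex : Prop :=
  AdmitsMidpoints X ∧ ∀ ε : ℝ, 0 < ε → ∃ ρ : ℝ, ρ ∈ Set.Ioo (0:ℝ) 1 ∧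
    ∀ x y z m : X, IsMidpoint x y m →
      ε * max (dist x z) (dist y z) < dist x y →
      dist m z ≤ (1 - ρ) * max (dist x z) (dist y z)

/-- `ρ` works as a modulus of nearly uniform convexity for the parameters `ε`, `R`:
for every infinite `ε`-separated family in a ball of radius `r ≤ R` around `y`, the ball
`B_{(1-ρ)r}(y)` intersects the closed convex hull of the family. -/
def NUCModulus (ε R ρ : ℝ) : Prop :=
  ∀ (ι : Type) [Infinite ι], ∀ (x : ι → X) (y : X) (r : ℝ), r ≤ R →
    (∀ i j : ι, i ≠ j → ε ≤ dist (x i) (x j)) → (∀ i, dist (x i) y ≤ r) →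
    (Metric.closedBall y ((1 - ρ) * r) ∩ closure (gConvexHull (Set.range x))).Nonempty

/-- Nearly uniform convexity. -/
def NearlyUniformlyConvex : Prop :=
  InftyConvex X ∧ ∀ R : ℝ, 0 < R → ∀ ε : ℝ, 0 < ε → ∃ ρ : ℝ, 0 < ρ ∧ NUCModulus X ε R ρ

/-- Reflexivity: every decreasing directed family of nonempty bounded closed convex sets
has nonempty intersection. -/
def MetricReflexive : Prop :=
  ∀ (I : Type) [Nonempty I] [Preorder I] [IsDirected I (· ≤ ·)], ∀ C : I → Set X,
    (∀ i, (C i).Nonempty) → (∀ i, Bornology.IsBounded (C i)) → (∀ i, IsClosed (C i)) →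
    (∀ i, GConvex (C i)) → (∀ i j : I, j ≤ i → C i ⊆ C j) → (⋂ i, C i).Nonempty

/-- The co-convex topology: the weakest topology containing all complements of closed
convex sets. -/
def coConvexTopology : TopologicalSpace X :=
  TopologicalSpace.generateFrom {U : Set X | ∃ C : Set X, IsClosed C ∧ GConvex C ∧ U = Cᶜ}

/-- The set of limit points of the sequence `x` in the co-convex topology. -/
def coLim {X : Type} [MetricSpace X] (x : ℕ → X) : Set X :=
  {a : X | Filter.Tendsto x Filter.atTop (@nhds X (coConvexTopology X) a)}

/-- Countable reflexivity. -/
def CountableReflexive : Prop :=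
  MetricReflexive X ∧ ∀ x : ℕ → X, (coLim x).Nonempty →
    ∃ φ : ℕ → ℕ, StrictMono φ ∧
      coLim x = ⋂ m : ℕ, closure (gConvexHull ((fun n => x (φ n)) '' Set.Ici m))

/-- Quasi-convexity: all sublevel sets are convex. -/
def GQuasiConvex {X : Type} [MetricSpace X] (f : X → ℝ) : Prop :=
  ∀ c : ℝ, GConvex {x : X | f x ≤ c}

/-- Quasi-monotonicity: both quasi-convex and quasi-concave. -/
def GQuasiMonotone {X : Type} [MetricSpace X] (f : X → ℝ) : Prop :=
  GQuasiConvex f ∧ GQuasiConvex (fun x => -f x)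

/-- The `p`-mean for real `p ∈ [1,∞)`. -/
noncomputable def pMeanR (p a b : ℝ) : ℝ := ((a ^ p + b ^ p) / 2) ^ (1 / p)

/-- `p`-convexity for real `p`. -/
def PConvexR (p : ℝ) : Prop :=
  AdmitsMidpoints X ∧ ∀ x y z m : X, IsMidpoint x y m →
    dist m z ≤ pMeanR p (dist x z) (dist y z)

/-- strict `p`-convexity for real `p`. -/
def StrictlyPConvexR (p : ℝ) : Prop :=
  AdmitsMidpoints X ∧ ∀ x y z m : X, IsMidpoint x y m →
    (if p = 1 then |dist x z - dist y z| < dist x y else x ≠ y) →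
    dist m z < pMeanR p (dist x z) (dist y z)

/-- uniform `p`-convexity for real `p`. -/
def UniformlyPConvexR (p : ℝ) : Prop :=
  AdmitsMidpoints X ∧ ∀ ε : ℝ, 0 < ε → ∃ ρ : ℝ, ρ ∈ Set.Ioo (0:ℝ) 1 ∧
    ∀ x y z m : X, IsMidpoint x y m →
      ε * pMeanR p (dist x z) (dist y z) < dist x y →
      dist m z ≤ (1 - ρ) * pMeanR p (dist x z) (dist y z)

/-- `ω(z,(x_n)) = limsup_n d(z,x_n)`. -/
noncomputable def asymRadius {X : Type} [MetricSpace X] (x : ℕ → X) (z : X) : ℝ :=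
  Filter.limsup (fun n => dist z (x n)) Filter.atTop

/-- `a` is the (unique) asymptotic center of the sequence `x`. -/
def IsAsymptoticCenter {X : Type} [MetricSpace X] (x : ℕ → X) (a : X) : Prop :=
  (∀ z : X, asymRadius x a ≤ asymRadius x z) ∧
  ∀ b : X, (∀ z : X, asymRadius x b ≤ asymRadius x z) → b = a

/-- Weak sequential convergence: `a` is the asymptotic center of every subsequence. -/
def WeakSeqConv {X : Type} [MetricSpace X] (x : ℕ → X) (a : X) : Prop :=
  ∀ φ : ℕ → ℕ, StrictMono φ → IsAsymptoticCenter (fun n => x (φ n)) a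

end Defs

/-! A closed set containing the midpoints of its points is geodesically convex: it contains the
points of a geodesic at dyadic times by induction on the denominator, and these are dense in the
geodesic. In an `∞`-convex space closed balls are midpoint-convex, hence convex. The sublevel sets
of a lower semicontinuous quasi-convex function are closed and convex, so their complements are
open in the co-convex topology, which is lower semicontinuity there. -/

section InftyConvexity

variable {X : Type} [MetricSpace X]

def MidpointConvex (S : Set X) : Prop :=
  ∀ a ∈ S, ∀ b ∈ S, ∀ m, IsMidpoint a b m → m ∈ S

theorem IsGeodesic.isMidpoint {γ : ℝ → X} {x y : X} (hγ : IsGeodesic γ x y)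
    {s u : ℝ} (hs : s ∈ Icc (0 : ℝ) 1) (hu : u ∈ Icc (0 : ℝ) 1) :
    IsMidpoint (γ s) (γ u) (γ ((s + u) / 2)) := by
  have hm : (s + u) / 2 ∈ Icc (0 : ℝ) 1 := ⟨by linarith [hs.1, hu.1], by linarith [hs.2, hu.2]⟩
  obtain ⟨-, -, hd⟩ := hγ
  constructor
  · rw [hd s hs _ hm, hd s hs u hu, show s - (s + u) / 2 = (s - u) / 2 by ring, abs_div, abs_two]
    ring
  · rw [hd u hu _ hm, hd s hs u hu, show u - (s + u) / 2 = -((s - u) / 2) by ring, abs_neg,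
      abs_div, abs_two]
    ring

theorem natCast_div_two_pow_mem_Icc {n k : ℕ} (hk : k ≤ 2 ^ n) :
    (k : ℝ) / 2 ^ n ∈ Icc (0 : ℝ) 1 :=
  ⟨by positivity, (div_le_one (by positivity)).2 (by exact_mod_cast hk)⟩

theorem exists_dyadic_near {t : ℝ} (ht : t ∈ Icc (0 : ℝ) 1) (n : ℕ) :
    ∃ k : ℕ, k ≤ 2 ^ n ∧ |t - (k : ℝ) / 2 ^ n| ≤ (2 ^ n)⁻¹ := by
  have h2n : (0 : ℝ) < 2 ^ n := by positivity
  have ht0 : 0 ≤ t * 2 ^ n := mul_nonneg ht.1 h2n.le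
  refine ⟨⌊t * 2 ^ n⌋₊, ?_, ?_⟩
  · have : (⌊t * 2 ^ n⌋₊ : ℝ) ≤ (2 ^ n : ℕ) := by
      push_cast
      nlinarith [Nat.floor_le ht0, ht.2]
    exact_mod_cast this
  · have hfloor : (⌊t * 2 ^ n⌋₊ : ℝ) / 2 ^ n ≤ t := (div_le_iff₀ h2n).2 (Nat.floor_le ht0)
    have hceil : t < (⌊t * 2 ^ n⌋₊ : ℝ) / 2 ^ n + (2 ^ n)⁻¹ := by
      rw [← one_div, ← add_div, lt_div_iff₀ h2n]
      exact Nat.lt_floor_add_one _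
    rw [abs_le]
    constructor <;> linarith [inv_pos.2 h2n]

theorem MidpointConvex.geodesic_dyadic_mem {S : Set X} (hS : MidpointConvex S) {γ : ℝ → X}
    {x y : X} (hγ : IsGeodesic γ x y) (hx : x ∈ S) (hy : y ∈ S) (n : ℕ) :
    ∀ k : ℕ, k ≤ 2 ^ n → γ ((k : ℝ) / 2 ^ n) ∈ S := by
  induction n with
  | zero =>
    intro k hk
    interval_cases k
    · simpa [hγ.1] using hx
    · simpa [hγ.2.1] using hy
  | succ n ih =>
    intro k hk
    rcases Nat.even_or_odd' k with ⟨j, rfl | rfl⟩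
    · have heq : ((2 * j : ℕ) : ℝ) / 2 ^ (n + 1) = (j : ℝ) / 2 ^ n := by push_cast; ring
      rw [heq]
      exact ih j (by omega)
    · have heq : ((2 * j + 1 : ℕ) : ℝ) / 2 ^ (n + 1) =
          ((j : ℝ) / 2 ^ n + ((j + 1 : ℕ) : ℝ) / 2 ^ n) / 2 := by push_cast; ring
      rw [heq]
      exact hS _ (ih j (by omega)) _ (ih (j + 1) (by omega)) _
        (hγ.isMidpoint (natCast_div_two_pow_mem_Icc (by omega))
          (natCast_div_two_pow_mem_Icc (by omega)))

theorem IsClosed.gConvex_of_midpointConvex {S : Set X} (hc : IsClosed S)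
    (hS : MidpointConvex S) : GConvex S := by
  intro x hx y hy γ hγ t ht
  refine hc.closure_subset (Metric.mem_closure_iff.2 fun ε hε => ?_)
  have hsmall : Tendsto (fun n : ℕ => (2 ^ n : ℝ)⁻¹ * dist x y) atTop (𝓝 0) := by
    simpa using (tendsto_inv_atTop_zero.comp
      (tendsto_pow_atTop_atTop_of_one_lt one_lt_two)).mul_const (dist x y)
  obtain ⟨n, hn⟩ := (hsmall.eventually_lt_const hε).exists
  obtain ⟨k, hk, hkt⟩ := exists_dyadic_near ht n
  refine ⟨γ ((k : ℝ) / 2 ^ n), hS.geodesic_dyadic_mem hγ hx hy n k hk, ?_⟩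
  calc dist (γ t) (γ ((k : ℝ) / 2 ^ n)) = |t - (k : ℝ) / 2 ^ n| * dist x y :=
        hγ.2.2 t ht _ (natCast_div_two_pow_mem_Icc hk)
    _ ≤ (2 ^ n)⁻¹ * dist x y := mul_le_mul_of_nonneg_right hkt dist_nonneg
    _ < ε := hn

theorem midpointConvex_closedBall (h : InftyConvex X) (y : X) (c : ℝ) :
    MidpointConvex (closedBall y c) :=
  fun _ ha _ hb _ hm => (h.2 _ _ y _ hm).trans (max_le ha hb)

theorem gConvex_closedBall (h : InftyConvex X) (y : X) (c : ℝ) : GConvex (closedBall y c) :=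
  isClosed_closedBall.gConvex_of_midpointConvex (midpointConvex_closedBall h y c)

theorem isOpen_coConvexTopology_compl {C : Set X} (hc : IsClosed C) (hC : GConvex C) :
    IsOpen[coConvexTopology X] Cᶜ :=
  TopologicalSpace.isOpen_generateFrom_of_mem ⟨C, hc, hC, rfl⟩

theorem LowerSemicontinuous.coConvex {β : Type*} [LinearOrder β]
    {f : X → β} (hf : LowerSemicontinuous f) (hconv : ∀ c, GConvex (f ⁻¹' Iic c)) :
    @LowerSemicontinuous X β (coConvexTopology X) _ f :=
  @lowerSemicontinuous_iff_isOpen_preimage X β (coConvexTopology X) f _ |>.2 fun c => by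
    simpa only [← preimage_compl, compl_Iic] using
      isOpen_coConvexTopology_compl (hf.isClosed_preimage c) (hconv c)

end InftyConvexity

/-- On an `∞`-convex space, every lower semicontinuous quasi-convex function
is lower semicontinuous for the co-convex topology; in particular `d(·,y)` is. -/
theorem quasiConvex_weakly_lsc (X : Type) [MetricSpace X] (h : InftyConvex X) :
    (∀ f : X → EReal, (∀ x, f x ≠ ⊥) → LowerSemicontinuous f →
      (∀ c : EReal, GConvex {x : X | f x ≤ c}) →
      @LowerSemicontinuous X EReal (coConvexTopology X) _ f) ∧
    ∀ y : X, @LowerSemicontinuous X ℝ (coConvexTopology X) _ (fun x => dist x y) :=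
  ⟨fun _ _ hf hconv => hf.coConvex hconv, fun y =>
    (continuous_id.dist continuous_const).lowerSemicontinuous.coConvex
      (gConvex_closedBall h y)⟩
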